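/- (Cloaking.) Let A be a symmetric fusion category over ℂ, c,c' ∈ Z(A), and a ∈ A regarded as an object of Z(A) with the symmetric half-braiding s_{−,a}. Then the strand a can be slid through the cloaking loop defining Π_{c,c'}: the morphism a⊗(c⊗_c c') → (c⊗_c c')⊗a in which a crosses the encircling loop on its left arc before passing c and c' equals the morphism in which a passes c and c' and then crosses the loop on its right arc. Equivalently, the braiding σ of Z(A) between a and c⊗_c c' intertwines the cloaking idempotent: (Π_{c,c'}⊗id_a)∘σ_{a,c⊗_cc'} = σ_{a,c⊗_cc'}∘(id_a⊗Π_{c,c'}). -/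

import Mathlib

/-!
Common setup for formalizing "The symmetric tensor product on the Drinfeld centre of a
symmetric fusion category" (arXiv:1711.03394).

We axiomatize the structure of a symmetric fusion category over `ℂ` on a category `A`
(simple objects, dimensions, twist, global dimension), and define the cloaking idempotent,
the symmetric tensor product `⊗ₛ` on (pre-)half-braided objects, the comparison morphisms
`η`, `ζ`, and the unit comparison morphisms `u₀, u₁, u₂, v₀, v₁, v₂` of the paper.
-/

namespace Paper1711

open CategoryTheory Category MonoidalCategory Limits

universe v u

variable (A : Type u) [Category.{v} A] [Preadditive A] [Linear ℂ A]
  [MonoidalCategory A] [SymmetricCategory A] [MonoidalPreadditive A] [MonoidalLinear ℂ A]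
  [RigidCategory A] [HasFiniteBiproducts A]

/-- An object of `A` together with a family of exchange morphisms in both directions;
this records the (underlying data of) a half-braiding in the convention of the paper:
`β a : a ⊗ obj ⟶ obj ⊗ a`. -/
structure HB where
  obj : A
  β : ∀ a : A, a ⊗ obj ⟶ obj ⊗ a
  β' : ∀ a : A, obj ⊗ a ⟶ a ⊗ obj

variable {A}

namespace HB

/-- The image of an object of `A` in the Drinfeld centre, with the symmetric half-braiding. -/
def of (x : A) : HB A := ⟨x, fun a => (β_ a x).hom, fun a => (β_ x a).hom⟩

/-- The underlying exchange data of an object of the Drinfeld centre. -/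
def fromCenter (c : Center A) : HB A :=
  ⟨c.1, fun a => (c.2.β a).inv, fun a => (c.2.β a).hom⟩

/-- The convolution tensor product `⊗_c` of half-braided objects. -/
def tens (x y : HB A) : HB A where
  obj := x.obj ⊗ y.obj
  β a := (α_ a x.obj y.obj).inv ≫ (x.β a ▷ y.obj) ≫ (α_ x.obj a y.obj).hom
      ≫ (x.obj ◁ y.β a) ≫ (α_ x.obj y.obj a).inv
  β' a := (α_ x.obj y.obj a).hom ≫ (x.obj ◁ y.β' a) ≫ (α_ x.obj a y.obj).inv
      ≫ (x.β' a ▷ y.obj) ≫ (α_ a x.obj y.obj).hom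

/-- The unit `𝕀_c` of the convolution tensor product. -/
def unitC : HB A := ⟨𝟙_ A, fun a => (ρ_ a).hom ≫ (λ_ a).inv, fun a => (λ_ a).hom ≫ (ρ_ a).inv⟩

end HB

/-- The braiding `β_c` of the Drinfeld centre (for the convolution tensor product), on
underlying data: it is given by the half-braiding. -/
def braidC (x y : HB A) : x.obj ⊗ y.obj ⟶ y.obj ⊗ x.obj := y.β x.obj

/-- `f` is (the underlying morphism of) a morphism of the Drinfeld centre from `x` to `y`:
it intertwines the half-braidings. -/
def IsCentral (x y : HB A) (f : x.obj ⟶ y.obj) : Prop :=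
  ∀ a : A, x.β a ≫ (f ▷ a) = (a ◁ f) ≫ y.β a

/-- Evaluation `x ⊗ xᘁ ⟶ 𝟙`, using the symmetry. -/
def ev' (x : A) : x ⊗ xᘁ ⟶ 𝟙_ A := (β_ x (xᘁ)).hom ≫ ε_ x (xᘁ)

/-- Coevaluation `𝟙 ⟶ xᘁ ⊗ x`, using the symmetry. -/
def coev' (x : A) : 𝟙_ A ⟶ xᘁ ⊗ x := η_ x (xᘁ) ≫ (β_ x (xᘁ)).hom

variable (A) in
/-- The data making `A` a symmetric fusion category over `ℂ`: a finite set of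
representatives of the isomorphism classes of simple objects, a simple unit, finite
dimensional hom spaces, semisimplicity, the canonical ribbon twist (which is `±1` on
simple objects), quantum dimensions `d_i`, the scalars `t_i = θ_i d_i`, and the (nonzero)
global dimension `D = ∑ d_i²`. -/
structure FusionData where
  n : ℕ
  X : Fin n → A
  simpleX : ∀ i, Simple (X i)
  simple_unit : Simple (𝟙_ A)
  homFinite : ∀ x y : A, FiniteDimensional ℂ (x ⟶ y)
  reps : ∀ Y : A, Simple Y → ∃ i, Nonempty (Y ≅ X i)
  reps_ne : ∀ i j : Fin n, i ≠ j → IsEmpty (X i ≅ X j)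
  semisimple : ∀ Y : A, ∃ (m : ℕ) (f : Fin m → Fin n), Nonempty (Y ≅ ⨁ fun k => X (f k))
  tw : ∀ Y : A, Y ⟶ Y
  tw_natural : ∀ {Y Z : A} (f : Y ⟶ Z), tw Y ≫ f = f ≫ tw Z
  tw_monoidal : ∀ Y Z : A, tw (Y ⊗ Z) = tw Y ⊗ₘ tw Z
  tw_invol : ∀ Y : A, tw Y ≫ tw Y = 𝟙 Y
  dim : Fin n → ℂ
  θ : Fin n → ℂ
  θ_pm : ∀ i, θ i = 1 ∨ θ i = -1
  tw_simple : ∀ i, tw (X i) = θ i • 𝟙 (X i)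
  dim_eq : ∀ i, η_ (X i) ((X i)ᘁ) ≫ (tw (X i) ▷ ((X i)ᘁ)) ≫ ev' (X i) = dim i • 𝟙 (𝟙_ A)
  t : Fin n → ℂ
  t_def : ∀ i, t i = θ i * dim i
  D : ℂ
  D_def : D = ∑ i, dim i ^ 2
  D_ne_zero : D ≠ 0

namespace FusionData

variable (S : FusionData A)

/-- The unlabelled loop of the paper, encircling (the strands of) a half-braided object `x`:
the sum over the simples `i` of `(d_i/D)` times the `i`-coloured loop, which crosses `x` via
the half-braiding on one arc and via the symmetry on the other. -/
noncomputable def loop (x : HB A) : x.obj ⟶ x.obj :=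
  ∑ i : Fin S.n, (S.dim i / S.D) •
    ((λ_ x.obj).inv
      ≫ (η_ (S.X i) ((S.X i)ᘁ) ▷ x.obj)
      ≫ (α_ (S.X i) ((S.X i)ᘁ) x.obj).hom
      ≫ ((S.X i) ◁ x.β ((S.X i)ᘁ))
      ≫ (α_ (S.X i) x.obj ((S.X i)ᘁ)).inv
      ≫ ((β_ (S.X i) x.obj).hom ▷ ((S.X i)ᘁ))
      ≫ (α_ x.obj (S.X i) ((S.X i)ᘁ)).hom
      ≫ (x.obj ◁ ev' (S.X i))
      ≫ (ρ_ x.obj).hom)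

/-- The cloaking idempotent `Π_{x,y}` on `x ⊗ y` (Equation (2.8) of the paper). -/
noncomputable def cloak (x y : HB A) : x.obj ⊗ y.obj ⟶ x.obj ⊗ y.obj :=
  S.loop (x.tens y)

/-- The underlying object `⊕ᵢ i ⊗ i*` of the unit `𝕀_s` of the symmetric tensor product. -/
noncomputable def unitSObj : A := ⨁ fun i : Fin S.n => S.X i ⊗ (S.X i)ᘁ

/-- Projection onto the `i`-th summand of `𝕀_s`. -/
noncomputable def unitSπ (i : Fin S.n) : S.unitSObj ⟶ S.X i ⊗ (S.X i)ᘁ :=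
  biproduct.π _ i

/-- Inclusion of the `i`-th summand of `𝕀_s`. -/
noncomputable def unitSι (i : Fin S.n) : S.X i ⊗ (S.X i)ᘁ ⟶ S.unitSObj :=
  biproduct.ι (fun i : Fin S.n => S.X i ⊗ (S.X i)ᘁ) i

/-- `u₀ = ⊕ᵢ evᵢ : 𝕀_s ⟶ 𝕀_c`. -/
noncomputable def u0 : S.unitSObj ⟶ 𝟙_ A :=
  ∑ i, S.unitSπ i ≫ ev' (S.X i)

/-- `v₀ = ⊕ᵢ (tᵢ/D) · coevᵢ : 𝕀_c ⟶ 𝕀_s`. -/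
noncomputable def v0 : 𝟙_ A ⟶ S.unitSObj :=
  ∑ i, (S.t i / S.D) • (η_ (S.X i) ((S.X i)ᘁ) ≫ S.unitSι i)

/-- `u₂ = ∑ᵢ (tᵢ/D) · (idᵢ ⊗ coev ⊗ idᵢ*) : 𝕀_s ⟶ 𝕀_s ⊗ 𝕀_s`, inserting a dual pair in the
middle of each summand `i ⊗ i*`. -/
noncomputable def u2 : S.unitSObj ⟶ S.unitSObj ⊗ S.unitSObj :=
  ∑ i, (S.t i / S.D) •
    (S.unitSπ i
      ≫ (S.X i ◁ (λ_ ((S.X i)ᘁ)).inv)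
      ≫ (S.X i ◁ (coev' (S.X i) ▷ ((S.X i)ᘁ)))
      ≫ (S.X i ◁ (α_ ((S.X i)ᘁ) (S.X i) ((S.X i)ᘁ)).hom)
      ≫ (α_ (S.X i) ((S.X i)ᘁ) (S.X i ⊗ (S.X i)ᘁ)).inv
      ≫ (S.unitSι i ⊗ₘ S.unitSι i))

/-- `v₁ : 𝕀_s ⊗ 𝕀_s ⟶ 𝕀_s`, contracting the middle dual pair of each matching summand
`(i ⊗ i*) ⊗ (i ⊗ i*)` by evaluation (and zero on non-matching summands). -/
noncomputable def v1 : S.unitSObj ⊗ S.unitSObj ⟶ S.unitSObj :=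
  ∑ i, ((S.unitSπ i ⊗ₘ S.unitSπ i)
      ≫ (α_ (S.X i) ((S.X i)ᘁ) (S.X i ⊗ (S.X i)ᘁ)).hom
      ≫ (S.X i ◁ (α_ ((S.X i)ᘁ) (S.X i) ((S.X i)ᘁ)).inv)
      ≫ (S.X i ◁ (ε_ (S.X i) ((S.X i)ᘁ) ▷ ((S.X i)ᘁ)))
      ≫ (S.X i ◁ (λ_ ((S.X i)ᘁ)).hom)
      ≫ S.unitSι i)

variable (A) in
/-- Chosen bases `B(a ⊗ i, j)` of the hom spaces `Hom(a ⊗ i, j)` together with the dual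
bases (transposes) with respect to the composition pairing, as in Definition 2.1 of the
paper.  This is the data needed to write down the half-braiding (2.12) on `𝕀_s`. -/
structure BasisData (S : FusionData A) where
  bIdx : A → Fin S.n → Fin S.n → Type
  bFin : ∀ a i j, Fintype (bIdx a i j)
  bas : ∀ a i j, Module.Basis (bIdx a i j) ℂ ((a ⊗ S.X i) ⟶ S.X j)
  bas' : ∀ a i j, bIdx a i j → (S.X j ⟶ a ⊗ S.X i)
  bas_dual_self : ∀ a i j (m : bIdx a i j), bas' a i j m ≫ bas a i j m = 𝟙 (S.X j)
  bas_dual_ne : ∀ a i j (m m' : bIdx a i j), m ≠ m' → bas' a i j m ≫ bas a i j m' = 0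

attribute [instance] BasisData.bFin

/-- `φ*` (Equation (2.4)): the mate `i* ⟶ j* ⊗ a` of a transpose `φᵗ : j ⟶ a ⊗ i`. -/
noncomputable def phiStar {a : A} {i j : Fin S.n} (φt : S.X j ⟶ a ⊗ S.X i) :
    ((S.X i)ᘁ) ⟶ ((S.X j)ᘁ) ⊗ a :=
  (λ_ ((S.X i)ᘁ)).inv
  ≫ (coev' (S.X j) ▷ ((S.X i)ᘁ))
  ≫ (α_ ((S.X j)ᘁ) (S.X j) ((S.X i)ᘁ)).hom
  ≫ (((S.X j)ᘁ) ◁ (φt ▷ ((S.X i)ᘁ)))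
  ≫ (((S.X j)ᘁ) ◁ (α_ a (S.X i) ((S.X i)ᘁ)).hom)
  ≫ (((S.X j)ᘁ) ◁ (a ◁ ev' (S.X i)))
  ≫ (((S.X j)ᘁ) ◁ (ρ_ a).hom)

/-- The mate `j* ⊗ a ⟶ i*` of a basis element `φ : a ⊗ i ⟶ j`. -/
noncomputable def phiStar' {a : A} {i j : Fin S.n} (φ : a ⊗ S.X i ⟶ S.X j) :
    ((S.X j)ᘁ) ⊗ a ⟶ ((S.X i)ᘁ) :=
  (ρ_ (((S.X j)ᘁ) ⊗ a)).inv
  ≫ ((((S.X j)ᘁ) ⊗ a) ◁ η_ (S.X i) ((S.X i)ᘁ))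
  ≫ (α_ ((S.X j)ᘁ) a (S.X i ⊗ (S.X i)ᘁ)).hom
  ≫ (((S.X j)ᘁ) ◁ (α_ a (S.X i) ((S.X i)ᘁ)).inv)
  ≫ (((S.X j)ᘁ) ◁ (φ ▷ ((S.X i)ᘁ)))
  ≫ (α_ ((S.X j)ᘁ) (S.X j) ((S.X i)ᘁ)).inv
  ≫ (ε_ (S.X j) ((S.X j)ᘁ) ▷ ((S.X i)ᘁ))
  ≫ (λ_ ((S.X i)ᘁ)).hom

/-- The half-braiding (2.12) on `𝕀_s = ⊕ᵢ i ⊗ i*`. -/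
noncomputable def unitSβ (U : BasisData A S) (a : A) :
    a ⊗ S.unitSObj ⟶ S.unitSObj ⊗ a :=
  ∑ i : Fin S.n, ∑ j : Fin S.n, ∑ m : U.bIdx a i j,
    ((a ◁ S.unitSπ i)
      ≫ (α_ a (S.X i) ((S.X i)ᘁ)).inv
      ≫ ((U.bas a i j m) ▷ ((S.X i)ᘁ))
      ≫ ((S.X j) ◁ S.phiStar (U.bas' a i j m))
      ≫ (α_ (S.X j) ((S.X j)ᘁ) a).inv
      ≫ (S.unitSι j ▷ a))

/-- The reverse half-braiding on `𝕀_s`. -/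
noncomputable def unitSβ' (U : BasisData A S) (a : A) :
    S.unitSObj ⊗ a ⟶ a ⊗ S.unitSObj :=
  ∑ i : Fin S.n, ∑ j : Fin S.n, ∑ m : U.bIdx a i j,
    ((S.unitSπ j ▷ a)
      ≫ (α_ (S.X j) ((S.X j)ᘁ) a).hom
      ≫ ((U.bas' a i j m) ▷ (((S.X j)ᘁ) ⊗ a))
      ≫ ((a ⊗ S.X i) ◁ S.phiStar' (U.bas a i j m))
      ≫ (α_ a (S.X i) ((S.X i)ᘁ)).hom
      ≫ (a ◁ S.unitSι i))

/-- The unit `𝕀_s` of the symmetric tensor product, with the half-braiding (2.12). -/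
noncomputable def unitS (U : BasisData A S) : HB A :=
  ⟨S.unitSObj, S.unitSβ U, S.unitSβ' U⟩

/-- The summand `(i ⊗ i*) ⊗ x ⟶ x` of the left unitor (2.13): the two strands of the
summand `i ⊗ i*` of `𝕀_s` annihilate around the strand of `x`. -/
noncomputable def lamSummand (x : HB A) (i : Fin S.n) :
    (S.X i ⊗ (S.X i)ᘁ) ⊗ x.obj ⟶ x.obj :=
  (α_ (S.X i) ((S.X i)ᘁ) x.obj).hom
  ≫ (S.X i ◁ x.β ((S.X i)ᘁ))
  ≫ (α_ (S.X i) x.obj ((S.X i)ᘁ)).inv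
  ≫ ((β_ (S.X i) x.obj).hom ▷ ((S.X i)ᘁ))
  ≫ (α_ x.obj (S.X i) ((S.X i)ᘁ)).hom
  ≫ (x.obj ◁ ev' (S.X i))
  ≫ (ρ_ x.obj).hom

/-- The mirrored summand `x ⊗ (i ⊗ i*) ⟶ x` of the right unitor. -/
noncomputable def rhoSummand (x : HB A) (i : Fin S.n) :
    x.obj ⊗ (S.X i ⊗ (S.X i)ᘁ) ⟶ x.obj :=
  (α_ x.obj (S.X i) ((S.X i)ᘁ)).inv
  ≫ (x.β' (S.X i) ▷ ((S.X i)ᘁ))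
  ≫ (α_ (S.X i) x.obj ((S.X i)ᘁ)).hom
  ≫ (S.X i ◁ (β_ x.obj ((S.X i)ᘁ)).hom)
  ≫ (α_ (S.X i) ((S.X i)ᘁ) x.obj).inv
  ≫ (ev' (S.X i) ▷ x.obj)
  ≫ (λ_ x.obj).hom

/-- The summand `x ⟶ (i ⊗ i*) ⊗ x` creating a dual pair wrapped around `x`
(cf. Equation (2.14)). -/
noncomputable def creSummand (x : HB A) (i : Fin S.n) :
    x.obj ⟶ (S.X i ⊗ (S.X i)ᘁ) ⊗ x.obj :=
  (ρ_ x.obj).inv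
  ≫ (x.obj ◁ η_ (S.X i) ((S.X i)ᘁ))
  ≫ (α_ x.obj (S.X i) ((S.X i)ᘁ)).inv
  ≫ ((β_ x.obj (S.X i)).hom ▷ ((S.X i)ᘁ))
  ≫ (α_ (S.X i) x.obj ((S.X i)ᘁ)).hom
  ≫ (S.X i ◁ x.β' ((S.X i)ᘁ))
  ≫ (α_ (S.X i) ((S.X i)ᘁ) x.obj).inv

/-- The 'snapping' annihilation `𝕀_s ⊗ x ⟶ x`: the incoming copy of `𝕀_s` is annihilated by
bending its constituent strands into each other around the strand of `x`. -/
noncomputable def snapAnn (x : HB A) : S.unitSObj ⊗ x.obj ⟶ x.obj :=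
  ∑ i, (S.unitSπ i ▷ x.obj) ≫ S.lamSummand x i

/-- The 'snapping' creation `x ⟶ 𝕀_s ⊗ x`: a fresh copy of `𝕀_s` is created by the dual
bending around the strand of `x`. -/
noncomputable def snapCre (x : HB A) : x.obj ⟶ S.unitSObj ⊗ x.obj :=
  ∑ i, (S.dim i / S.D) • (S.creSummand x i ≫ (S.unitSι i ▷ x.obj))

end FusionData

variable (A) in
/-- The data of the symmetric tensor product on the Drinfeld centre of `A`: for each pair of
half-braided objects, a chosen splitting of the cloaking idempotent `Π` (the subobject
`x ⊗_Π y`, with its inclusion and projection). -/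
structure SymSetup extends FusionData A where
  sObj : HB A → HB A → A
  incl : ∀ x y : HB A, sObj x y ⟶ x.obj ⊗ y.obj
  proj : ∀ x y : HB A, x.obj ⊗ y.obj ⟶ sObj x y
  incl_proj : ∀ x y, incl x y ≫ proj x y = 𝟙 (sObj x y)
  proj_incl : ∀ x y, proj x y ≫ incl x y = toFusionData.cloak x y

namespace SymSetup

variable (S : SymSetup A)

/-- The symmetric tensor product `x ⊗ₛ y`, with the half-braiding induced from that of
`x ⊗ y` (Definition 2.3 of the paper). -/
noncomputable def stens (x y : HB A) : HB A where
  obj := S.sObj x y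
  β a := (a ◁ S.incl x y) ≫ (x.tens y).β a ≫ (S.proj x y ▷ a)
  β' a := (S.incl x y ▷ a) ≫ (x.tens y).β' a ≫ (a ◁ S.proj x y)

/-- The symmetric tensor product of morphisms: `f ⊗ₛ g = π ∘ (f ⊗ g) ∘ ι`. -/
noncomputable def smor {x y x' y' : HB A} (f : x.obj ⟶ x'.obj) (g : y.obj ⟶ y'.obj) :
    S.sObj x y ⟶ S.sObj x' y' :=
  S.incl x y ≫ (f ⊗ₘ g) ≫ S.proj x' y'

/-- Exchange of the middle two factors using the symmetry of `A`. -/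
def mid4 (w x y z : A) : (w ⊗ x) ⊗ (y ⊗ z) ⟶ (w ⊗ y) ⊗ (x ⊗ z) :=
  (α_ w x (y ⊗ z)).hom
  ≫ (w ◁ ((α_ x y z).inv ≫ ((β_ x y).hom ▷ z) ≫ (α_ y x z).hom))
  ≫ (α_ w y (x ⊗ z)).inv

/-- The lax comparison morphism
`η : (c ⊗_c c') ⊗ₛ (d ⊗_c d') ⟶ (c ⊗ₛ d) ⊗_c (c' ⊗ₛ d')` (Equation (4.1)). -/
noncomputable def etaMor (c c' d d' : HB A) :
    S.sObj (c.tens c') (d.tens d') ⟶ (S.sObj c d) ⊗ (S.sObj c' d') :=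
  S.incl (c.tens c') (d.tens d') ≫ mid4 c.obj c'.obj d.obj d'.obj
    ≫ (S.proj c d ⊗ₘ S.proj c' d')

/-- The oplax comparison morphism
`ζ : (c ⊗ₛ d) ⊗_c (c' ⊗ₛ d') ⟶ (c ⊗_c c') ⊗ₛ (d ⊗_c d')` (Equation (4.1)). -/
noncomputable def zetaMor (c d c' d' : HB A) :
    (S.sObj c d) ⊗ (S.sObj c' d') ⟶ S.sObj (c.tens c') (d.tens d') :=
  (S.incl c d ⊗ₘ S.incl c' d') ≫ mid4 c.obj d.obj c'.obj d'.obj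
    ≫ S.proj (c.tens c') (d.tens d')

/-- The associator for the symmetric tensor product, induced from the associator of `A`. -/
noncomputable def alphaS (x y z : HB A) :
    S.sObj (S.stens x y) z ⟶ S.sObj x (S.stens y z) :=
  S.incl (S.stens x y) z ≫ (S.incl x y ▷ z.obj) ≫ (α_ x.obj y.obj z.obj).hom
    ≫ (x.obj ◁ S.proj y z) ≫ S.proj x (S.stens y z)

/-- The symmetry `β_s` for the symmetric tensor product, induced from the symmetry of `A`
(Equation (2.17)). -/
noncomputable def brS (x y : HB A) : S.sObj x y ⟶ S.sObj y x :=
  S.incl x y ≫ (β_ x.obj y.obj).hom ≫ S.proj y x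

/-- The left unitor `λ_s : 𝕀_s ⊗ₛ x ⟶ x` (Equation (2.13)). -/
noncomputable def lamS (U : FusionData.BasisData A S.toFusionData) (x : HB A) :
    S.sObj (S.unitS U) x ⟶ x.obj :=
  S.incl (S.unitS U) x ≫ ∑ i, ((S.unitSπ i ▷ x.obj) ≫ S.lamSummand x i)

/-- The right unitor `ρ_s : x ⊗ₛ 𝕀_s ⟶ x`. -/
noncomputable def rhoS (U : FusionData.BasisData A S.toFusionData) (x : HB A) :
    S.sObj x (S.unitS U) ⟶ x.obj :=
  S.incl x (S.unitS U) ≫ ∑ i, ((x.obj ◁ S.unitSπ i) ≫ S.rhoSummand x i)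

/-- `u₁ : 𝕀_c ⊗ₛ 𝕀_c ⟶ 𝕀_c`, the canonical comparison. -/
noncomputable def u1 : S.sObj HB.unitC HB.unitC ⟶ 𝟙_ A :=
  S.incl HB.unitC HB.unitC ≫ (λ_ (𝟙_ A)).hom

/-- `v₂ : 𝕀_c ⟶ 𝕀_c ⊗ₛ 𝕀_c`, the canonical comparison. -/
noncomputable def v2 : 𝟙_ A ⟶ S.sObj HB.unitC HB.unitC :=
  (λ_ (𝟙_ A)).inv ≫ S.proj HB.unitC HB.unitC

end SymSetup

/-!
Each summand of the loop around `c ⊗_c c'` is a composite of morphisms of the Drinfeld centre: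
the cup and cap coloured by `i` are images of morphisms of `A` under the braided embedding
`A → Z(A)`, and the two crossings with `c ⊗ c'` are braidings of `Z(A)`. So the loop is a
central endomorphism of `c ⊗ c'`, and central endomorphisms commute with half-braidings,
in particular with the crossing by `a`.
-/

section Encircle

open Functor.LaxMonoidal Functor.OplaxMonoidal

variable {C : Type*} [Category C] [MonoidalCategory C] [BraidedCategory C]

def encircle (z : Center C) {X Y : C} (h : 𝟙_ C ⟶ X ⊗ Y) (e : X ⊗ Y ⟶ 𝟙_ C) :
    z.1 ⟶ z.1 :=
  (λ_ z.1).inv ≫ (h ▷ z.1) ≫ (α_ X Y z.1).hom ≫ (X ◁ (z.2.β Y).inv) ≫ (α_ X z.1 Y).inv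
    ≫ ((β_ X z.1).hom ▷ Y) ≫ (α_ z.1 X Y).hom ≫ (z.1 ◁ e) ≫ (ρ_ z.1).hom

noncomputable def encircleHom (z : Center C) {X Y : C} (h : 𝟙_ C ⟶ X ⊗ Y)
    (e : X ⊗ Y ⟶ 𝟙_ C) : z ⟶ z :=
  let F := Center.ofBraided C
  (λ_ z).inv ≫ ((ε F ≫ F.map h ≫ δ F X Y) ▷ z) ≫ (α_ (F.obj X) (F.obj Y) z).hom
    ≫ (F.obj X ◁ (Center.braiding z (F.obj Y)).inv) ≫ (α_ (F.obj X) z (F.obj Y)).inv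
    ≫ ((Center.braiding (F.obj X) z).hom ▷ F.obj Y) ≫ (α_ z (F.obj X) (F.obj Y)).hom
    ≫ (z ◁ (μ F X Y ≫ F.map e ≫ η F)) ≫ (ρ_ z).hom

lemma encircleHom_f (z : Center C) {X Y : C} (h : 𝟙_ C ⟶ X ⊗ Y) (e : X ⊗ Y ⟶ 𝟙_ C) :
    (encircleHom z h e).f = encircle z h e := by
  simp only [encircleHom, encircle, Center.comp_f, Center.whiskerRight_f, Center.whiskerLeft_f,
    Center.associator_hom_f, Center.associator_inv_f, Center.leftUnitor_inv_f,
    Center.rightUnitor_hom_f, Center.ofBraided_ε_f, Center.ofBraided_δ_f, Center.ofBraided_μ_f,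
    Center.ofBraided_η_f, Center.ofBraided_map_f, Center.braiding_hom_f, Center.braiding_inv_f]
  erw [Category.id_comp, Category.comp_id, Category.id_comp, Category.comp_id]
  rfl

lemma halfBraiding_inv_comp_encircle (z : Center C) {X Y : C} (h : 𝟙_ C ⟶ X ⊗ Y)
    (e : X ⊗ Y ⟶ 𝟙_ C) (a : C) :
    (z.2.β a).inv ≫ (encircle z h e ▷ a) = (a ◁ encircle z h e) ≫ (z.2.β a).inv := by
  rw [Iso.eq_comp_inv, Category.assoc, ← encircleHom_f, (encircleHom z h e).comm,
    Iso.inv_hom_id_assoc]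

end Encircle

lemma comp_sum_smul_whiskerRight_eq {R : Type*} [Semiring R] {C : Type*} [Category C]
    [Preadditive C] [Linear R C] [MonoidalCategory C] [MonoidalPreadditive C]
    [MonoidalLinear R C] {X a : C} {ι : Type*} (s : Finset ι) (r : ι → R) (f : ι → (X ⟶ X))
    (g : a ⊗ X ⟶ X ⊗ a) (hf : ∀ i ∈ s, g ≫ (f i ▷ a) = (a ◁ f i) ≫ g) :
    g ≫ ((∑ i ∈ s, r i • f i) ▷ a) = (a ◁ ∑ i ∈ s, r i • f i) ≫ g := by
  simp only [sum_whiskerRight, whiskerLeft_sum, Preadditive.comp_sum, Preadditive.sum_comp,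
    MonoidalLinear.smul_whiskerRight, MonoidalLinear.whiskerLeft_smul, Linear.comp_smul,
    Linear.smul_comp]
  exact Finset.sum_congr rfl fun i hi => by rw [hf i hi]

section Loop

variable {C : Type*} [Category C] [Preadditive C] [Linear ℂ C] [MonoidalCategory C]
  [SymmetricCategory C] [RigidCategory C] [HasFiniteBiproducts C]

lemma FusionData.loop_fromCenter (S : FusionData C) (z : Center C) :
    S.loop (HB.fromCenter z) =
      ∑ i, (S.dim i / S.D) • encircle z (η_ (S.X i) (S.X i)ᘁ) (ev' (S.X i)) :=
  rfl

lemma FusionData.braidC_comp_loop_fromCenter [MonoidalPreadditive C] [MonoidalLinear ℂ C]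
    (S : FusionData C) (z : Center C) (a : C) :
    braidC (HB.of a) (HB.fromCenter z) ≫ (S.loop (HB.fromCenter z) ▷ a)
      = (a ◁ S.loop (HB.fromCenter z)) ≫ braidC (HB.of a) (HB.fromCenter z) :=
  S.loop_fromCenter z ▸ comp_sum_smul_whiskerRight_eq _ _ _ _
    fun _ _ => halfBraiding_inv_comp_encircle z _ _ a

end Loop

lemma HB.fromCenter_tens {C : Type*} [Category C] [MonoidalCategory C] (c c' : Center C) :
    (HB.fromCenter c).tens (HB.fromCenter c') = HB.fromCenter (c ⊗ c') := by
  simp [HB.tens, HB.fromCenter]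

/-- **Cloaking, Lemma 2.4.**
For a symmetric fusion category `A` over `ℂ`, `c, c' ∈ Z(A)` and `a ∈ A` regarded as an
object of `Z(A)` with the symmetric half-braiding, the braiding `σ` of `Z(A)` between `a`
and `c ⊗_c c'` intertwines the cloaking idempotent:
`(Π_{c,c'} ⊗ id_a) ∘ σ_{a, c⊗_c c'} = σ_{a, c⊗_c c'} ∘ (id_a ⊗ Π_{c,c'})`. -/
theorem statement2 (S : FusionData A) (c c' : Center A) (a : A) :
    braidC (HB.of a) ((HB.fromCenter c).tens (HB.fromCenter c'))
        ≫ (S.cloak (HB.fromCenter c) (HB.fromCenter c') ▷ a)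
      = (a ◁ S.cloak (HB.fromCenter c) (HB.fromCenter c'))
        ≫ braidC (HB.of a) ((HB.fromCenter c).tens (HB.fromCenter c')) := by
  have h := S.braidC_comp_loop_fromCenter (c ⊗ c') a
  rw [← HB.fromCenter_tens] at h
  exact h

end Paper1711
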